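/- arXiv:2202.13777 — 4 statements merged into one kernel-verified Lean document; each statement's English description precedes it below -/
import Mathlib

section
/- Suppose there is a constant c such that for all h1, h2 ∈ H, |ε_s(h1,h2) − ε_t(h1,h2)| ≤ c·W, where W is a fixed nonnegative real (playing the role of the Wasserstein distance between P_s and P_t). Let h* ∈ H minimize the joint error ε_s(h, f_s) + ε_t(h, f_t) over H, and set λ = ε_s(h*, f_s) + ε_t(h*, f_t). Then for every h ∈ H: ε_t(h, f_t) ≤ ε_s(h, f_s) + c·W + λ. -/
open MeasureTheory

lemma integrable_abs_sub_of_bdd {X : Type*} [MeasurableSpace X]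
    (P : Measure X) [IsProbabilityMeasure P] {g1 g2 : X → ℝ}
    (m1 : Measurable g1) (m2 : Measurable g2)
    (b1 : ∀ x, g1 x ∈ Set.Icc (0 : ℝ) 1) (b2 : ∀ x, g2 x ∈ Set.Icc (0 : ℝ) 1) :
    Integrable (fun x => |g1 x - g2 x|) P := by
  refine (integrable_const (2 : ℝ)).mono'
    ((m1.sub m2).abs.aestronglyMeasurable) (Filter.Eventually.of_forall fun x => ?_)
  have h1 := b1 x; have h2 := b2 x
  simp only [Set.mem_Icc] at h1 h2
  rw [Real.norm_eq_abs, abs_abs, abs_le]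
  constructor <;> linarith

/-- Generalization bound with the optimal joint error:
if `|ε_s(h1,h2) − ε_t(h1,h2)| ≤ c·W` for all `h1,h2 ∈ H` and `h*` minimizes the
joint error `ε_s(h,f_s) + ε_t(h,f_t)` over `H` with optimal value `λ`, then for
every `h ∈ H`, `ε_t(h,f_t) ≤ ε_s(h,f_s) + c·W + λ`. -/
theorem generalization_bound_joint_error {X : Type*} [MeasurableSpace X]
    (Ps Pt : Measure X) [IsProbabilityMeasure Ps] [IsProbabilityMeasure Pt]
    (H : Set (X → ℝ)) (fs ft : X → ℝ)
    (hmeas : ∀ h ∈ H, Measurable h)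
    (hbd : ∀ h ∈ H, ∀ x, h x ∈ Set.Icc (0 : ℝ) 1)
    (mfs : Measurable fs) (mft : Measurable ft)
    (bfs : ∀ x, fs x ∈ Set.Icc (0 : ℝ) 1) (bft : ∀ x, ft x ∈ Set.Icc (0 : ℝ) 1)
    (c W : ℝ) (hc : 0 ≤ c) (hW : 0 ≤ W)
    (hbound : ∀ h1 ∈ H, ∀ h2 ∈ H,
      |(∫ x, |h1 x - h2 x| ∂Ps) - (∫ x, |h1 x - h2 x| ∂Pt)| ≤ c * W)
    (hstar : X → ℝ) (hstarH : hstar ∈ H)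
    (hmin : ∀ h ∈ H,
      (∫ x, |hstar x - fs x| ∂Ps) + (∫ x, |hstar x - ft x| ∂Pt) ≤
        (∫ x, |h x - fs x| ∂Ps) + (∫ x, |h x - ft x| ∂Pt))
    (lam : ℝ)
    (hlam : lam = (∫ x, |hstar x - fs x| ∂Ps) + (∫ x, |hstar x - ft x| ∂Pt)) :
    ∀ h ∈ H,
      (∫ x, |h x - ft x| ∂Pt) ≤ (∫ x, |h x - fs x| ∂Ps) + c * W + lam := by
  intro h hH
  have mh := hmeas h hH
  have mhs := hmeas hstar hstarH
  have bh := hbd h hH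
  have bhs := hbd hstar hstarH
  -- triangle on Pt: ε_t(h,ft) ≤ ε_t(h,h*) + ε_t(h*,ft)
  have t1 : (∫ x, |h x - ft x| ∂Pt) ≤
      (∫ x, |h x - hstar x| ∂Pt) + (∫ x, |hstar x - ft x| ∂Pt) := by
    rw [← integral_add (integrable_abs_sub_of_bdd Pt mh mhs bh bhs)
      (integrable_abs_sub_of_bdd Pt mhs mft bhs bft)]
    refine integral_mono (integrable_abs_sub_of_bdd Pt mh mft bh bft)
      ((integrable_abs_sub_of_bdd Pt mh mhs bh bhs).add
        (integrable_abs_sub_of_bdd Pt mhs mft bhs bft)) fun x => ?_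
    exact abs_sub_le (h x) (hstar x) (ft x)
  -- ε_t(h,h*) ≤ ε_s(h,h*) + cW
  have t2 : (∫ x, |h x - hstar x| ∂Pt) ≤ (∫ x, |h x - hstar x| ∂Ps) + c * W := by
    have := hbound h hH hstar hstarH
    have := abs_le.mp this
    linarith [this.1]
  -- triangle on Ps: ε_s(h,h*) ≤ ε_s(h,fs) + ε_s(h*,fs)
  have t3 : (∫ x, |h x - hstar x| ∂Ps) ≤
      (∫ x, |h x - fs x| ∂Ps) + (∫ x, |hstar x - fs x| ∂Ps) := by
    rw [← integral_add (integrable_abs_sub_of_bdd Ps mh mfs bh bfs)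
      (integrable_abs_sub_of_bdd Ps mhs mfs bhs bfs)]
    refine integral_mono (integrable_abs_sub_of_bdd Ps mh mhs bh bhs)
      ((integrable_abs_sub_of_bdd Ps mh mfs bh bfs).add
        (integrable_abs_sub_of_bdd Ps mhs mfs bhs bfs)) fun x => ?_
    calc |h x - hstar x| ≤ |h x - fs x| + |fs x - hstar x| := abs_sub_le _ _ _
      _ = |h x - fs x| + |hstar x - fs x| := by rw [abs_sub_comm (fs x)]
  subst hlam
  linarith
end

section
/- Under the assumptions that |ε_s(h1,h2) − ε_t(h1,h2)| ≤ c·W for all h1, h2 ∈ H and that the labeling functions f_s, f_t belong to H, every h ∈ H satisfies ε_t(h, f_t) ≤ ε_s(h, f_s) + c·W + min{ε_s(f_s,f_t), ε_t(f_s,f_t)}. -/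
open MeasureTheory

private lemma integ_abs_diff {X : Type*} [MeasurableSpace X]
    (P : Measure X) [IsProbabilityMeasure P] (g1 g2 : X → ℝ)
    (h1 : Measurable g1) (h2 : Measurable g2)
    (b1 : ∀ x, g1 x ∈ Set.Icc (0 : ℝ) 1) (b2 : ∀ x, g2 x ∈ Set.Icc (0 : ℝ) 1) :
    Integrable (fun x => |g1 x - g2 x|) P := by
  apply Integrable.mono' (integrable_const (1 : ℝ))
  · exact ((h1.sub h2).abs).aestronglyMeasurable
  · filter_upwards with x
    rw [Real.norm_eq_abs, abs_abs]
    have := (b1 x).1; have := (b1 x).2; have := (b2 x).1; have := (b2 x).2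
    rw [abs_sub_le_iff]; constructor <;> linarith

private lemma tri_int {X : Type*} [MeasurableSpace X]
    (P : Measure X) [IsProbabilityMeasure P] (g1 g2 g3 : X → ℝ)
    (h1 : Measurable g1) (h2 : Measurable g2) (h3 : Measurable g3)
    (b1 : ∀ x, g1 x ∈ Set.Icc (0 : ℝ) 1) (b2 : ∀ x, g2 x ∈ Set.Icc (0 : ℝ) 1)
    (b3 : ∀ x, g3 x ∈ Set.Icc (0 : ℝ) 1) :
    (∫ x, |g1 x - g3 x| ∂P) ≤ (∫ x, |g1 x - g2 x| ∂P) + (∫ x, |g2 x - g3 x| ∂P) := by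
  rw [← integral_add (integ_abs_diff P g1 g2 h1 h2 b1 b2) (integ_abs_diff P g2 g3 h2 h3 b2 b3)]
  apply integral_mono (integ_abs_diff P g1 g3 h1 h3 b1 b3)
    ((integ_abs_diff P g1 g2 h1 h2 b1 b2).add (integ_abs_diff P g2 g3 h2 h3 b2 b3))
  intro x
  exact abs_sub_le (g1 x) (g2 x) (g3 x)

/-- If the labeling functions `f_s, f_t` belong to `H` and
`|ε_s(h1,h2) − ε_t(h1,h2)| ≤ c·W` for all `h1, h2 ∈ H`, then every `h ∈ H`
satisfies `ε_t(h,f_t) ≤ ε_s(h,f_s) + c·W + min{ε_s(f_s,f_t), ε_t(f_s,f_t)}`. -/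
theorem generalization_bound_labeling_dist {X : Type*} [MeasurableSpace X]
    (Ps Pt : Measure X) [IsProbabilityMeasure Ps] [IsProbabilityMeasure Pt]
    (H : Set (X → ℝ)) (fs ft : X → ℝ)
    (hmeas : ∀ h ∈ H, Measurable h)
    (hbd : ∀ h ∈ H, ∀ x, h x ∈ Set.Icc (0 : ℝ) 1)
    (hfs : fs ∈ H) (hft : ft ∈ H)
    (c W : ℝ) (hc : 0 ≤ c) (hW : 0 ≤ W)
    (hbound : ∀ h1 ∈ H, ∀ h2 ∈ H,
      |(∫ x, |h1 x - h2 x| ∂Ps) - (∫ x, |h1 x - h2 x| ∂Pt)| ≤ c * W) :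
    ∀ h ∈ H,
      (∫ x, |h x - ft x| ∂Pt) ≤
        (∫ x, |h x - fs x| ∂Ps) + c * W +
          min (∫ x, |fs x - ft x| ∂Ps) (∫ x, |fs x - ft x| ∂Pt) := by
  intro h hH
  have mh := hmeas h hH; have ms := hmeas fs hfs; have mt := hmeas ft hft
  have bh := hbd h hH; have bs := hbd fs hfs; have bt := hbd ft hft
  rcases le_total (∫ x, |fs x - ft x| ∂Ps) (∫ x, |fs x - ft x| ∂Pt) with hle | hle
  · rw [min_eq_left hle]
    have tri := tri_int Ps h fs ft mh ms mt bh bs bt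
    have shift : (∫ x, |h x - ft x| ∂Pt) ≤ (∫ x, |h x - ft x| ∂Ps) + c * W := by
      have := hbound h hH ft hft
      have := abs_le.mp this
      linarith [this.1]
    linarith
  · rw [min_eq_right hle]
    have tri := tri_int Pt h fs ft mh ms mt bh bs bt
    have shift : (∫ x, |h x - fs x| ∂Pt) ≤ (∫ x, |h x - fs x| ∂Ps) + c * W := by
      have := abs_le.mp (hbound h hH fs hfs)
      linarith [this.1]
    linarith
end

section
/- Suppose f_s, f_t ∈ H and the cross-domain risk-difference bound |ε_s(h1,h2) − ε_t(h1,h2)| ≤ c·W(P_s,P_t) holds for all h1,h2 ∈ H, where W denotes a metric on probability distributions satisfying the triangle inequality. If Ŵ denotes the distance between empirical distributions P̂_s, P̂_t, and |W(P̂_s, P̂_t) − W(P_s, P_t)| ≤ δ, then for all h ∈ H: ε_t(h, f_t) ≤ ε_s(h, f_s) + c·W(P̂_s, P̂_t) + min{ε_s(f_s,f_t), ε_t(f_s,f_t)} + c·δ. -/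
open MeasureTheory

private lemma integ_abs_sub {X : Type*} [MeasurableSpace X] (μ : Measure X)
    [IsProbabilityMeasure μ] {f g : X → ℝ}
    (hf : Measurable f) (hg : Measurable g)
    (hfb : ∀ x, f x ∈ Set.Icc (0:ℝ) 1) (hgb : ∀ x, g x ∈ Set.Icc (0:ℝ) 1) :
    Integrable (fun x => |f x - g x|) μ := by
  refine (integrable_const (1:ℝ)).mono' ((hf.sub hg).abs.aestronglyMeasurable) ?_
  filter_upwards with x
  have h1 := hfb x; have h2 := hgb x
  simp only [Set.mem_Icc] at h1 h2
  rw [Real.norm_eq_abs, abs_abs, abs_sub_le_iff]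
  constructor <;> linarith

/-- Empirical generalization bound: with `f_s, f_t ∈ H`, the
cross-domain risk bound `|ε_s − ε_t| ≤ c·W(P_s,P_t)`, and
`|W(P̂_s,P̂_t) − W(P_s,P_t)| ≤ δ`, every `h ∈ H` satisfies
`ε_t(h,f_t) ≤ ε_s(h,f_s) + c·W(P̂_s,P̂_t) + min{ε_s(f_s,f_t), ε_t(f_s,f_t)} + c·δ`. -/
theorem empirical_generalization_bound {X : Type*} [MeasurableSpace X]
    (Ps Pt Pshat Pthat : Measure X)
    [IsProbabilityMeasure Ps] [IsProbabilityMeasure Pt]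
    [IsProbabilityMeasure Pshat] [IsProbabilityMeasure Pthat]
    (W : Measure X → Measure X → ℝ)
    (H : Set (X → ℝ)) (fs ft : X → ℝ)
    (hmeas : ∀ h ∈ H, Measurable h)
    (hbd : ∀ h ∈ H, ∀ x, h x ∈ Set.Icc (0 : ℝ) 1)
    (hfs : fs ∈ H) (hft : ft ∈ H)
    (c δ : ℝ) (hc : 0 ≤ c) (hδ : 0 ≤ δ)
    (hbound : ∀ h1 ∈ H, ∀ h2 ∈ H,
      |(∫ x, |h1 x - h2 x| ∂Ps) - (∫ x, |h1 x - h2 x| ∂Pt)| ≤ c * W Ps Pt)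
    (hemp : |W Pshat Pthat - W Ps Pt| ≤ δ) :
    ∀ h ∈ H,
      (∫ x, |h x - ft x| ∂Pt) ≤
        (∫ x, |h x - fs x| ∂Ps) + c * W Pshat Pthat +
          min (∫ x, |fs x - ft x| ∂Ps) (∫ x, |fs x - ft x| ∂Pt) + c * δ := by
  intro h hH
  have hWle : c * W Ps Pt ≤ c * W Pshat Pthat + c * δ := by
    have : W Ps Pt ≤ W Pshat Pthat + δ := by
      have := abs_le.1 hemp; linarith [this.1]
    nlinarith
  -- triangle inequality for integrals over a given measure
  have tri : ∀ (μ : Measure X) [IsProbabilityMeasure μ],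
      (∫ x, |h x - ft x| ∂μ) ≤ (∫ x, |h x - fs x| ∂μ) + (∫ x, |fs x - ft x| ∂μ) := by
    intro μ _
    have i1 := integ_abs_sub μ (hmeas h hH) (hmeas fs hfs) (hbd h hH) (hbd fs hfs)
    have i2 := integ_abs_sub μ (hmeas fs hfs) (hmeas ft hft) (hbd fs hfs) (hbd ft hft)
    calc (∫ x, |h x - ft x| ∂μ)
        ≤ ∫ x, (|h x - fs x| + |fs x - ft x|) ∂μ := by
          refine integral_mono (integ_abs_sub μ (hmeas h hH) (hmeas ft hft) (hbd h hH) (hbd ft hft)) (i1.add i2) ?_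
          intro x
          calc |h x - ft x| = |(h x - fs x) + (fs x - ft x)| := by ring_nf
            _ ≤ |h x - fs x| + |fs x - ft x| := abs_add_le _ _
      _ = (∫ x, |h x - fs x| ∂μ) + (∫ x, |fs x - ft x| ∂μ) := integral_add i1 i2
  rcases min_cases (∫ x, |fs x - ft x| ∂Ps) (∫ x, |fs x - ft x| ∂Pt) with ⟨hm, _⟩ | ⟨hm, _⟩
  · -- use path through Ps triangle: ε_t(h,ft) ≤ ε_s(h,ft) + cW ≤ ε_s(h,fs) + ε_s(fs,ft) + cW
    have hb := hbound h hH ft hft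
    have h1 : (∫ x, |h x - ft x| ∂Pt) ≤ (∫ x, |h x - ft x| ∂Ps) + c * W Ps Pt := by
      have := abs_le.1 hb; linarith [this.1]
    have h2 := tri Ps
    rw [hm]; linarith
  · -- path: ε_t(h,ft) ≤ ε_t(h,fs) + ε_t(fs,ft), ε_t(h,fs) ≤ ε_s(h,fs) + cW
    have hb := hbound h hH fs hfs
    have h1 : (∫ x, |h x - fs x| ∂Pt) ≤ (∫ x, |h x - fs x| ∂Ps) + c * W Ps Pt := by
      have := abs_le.1 hb; linarith [this.1]
    have h2 := tri Pt
    rw [hm]; linarith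
end

section
/- If γ* solves the entropy-regularized optimal transport problem min_{γ ∈ Ω} ⟨γ, M⟩_F + λ Σ_{ij} γ_{ij} log γ_{ij} with λ > 0, where Ω is the transportation polytope with marginals μ and ν (all entries of μ, ν strictly positive), then γ* is unique and has the form γ*_{ij} = u_i exp(−M_{ij}/λ) v_j for some strictly positive vectors u ∈ ℝ^{n_s}, v ∈ ℝ^{n_t}. -/
/-!
The objective is strictly convex on the convex transportation polytope, so its minimizer is
unique. The minimizer has no zero entry: moving a fraction `t` of the way towards the product
coupling `μ ⊗ ν` changes the objective by at most `t (C + λ μ_a ν_b log t)`, which is negative for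
small `t` since `x log x` has infinite slope at `0`. The minimizer is therefore stationary along
the directions `e_ij - e_ij' - e_i'j + e_i'j'`, which preserve both marginals; this says that
`M_ij + λ log γ_ij` satisfies the cycle condition, hence equals `a_i + b_j`, and exponentiating
gives `u_i = exp (a_i / λ)`, `v_j = exp (b_j / λ)`.
-/

open Finset Real Filter Topology

variable {ι κ : Type*} [Fintype ι] [Fintype κ]

def couplings (μ : ι → ℝ) (ν : κ → ℝ) : Set (Matrix ι κ ℝ) :=
  {γ | (∀ i j, 0 ≤ γ i j) ∧ (∀ i, ∑ j, γ i j = μ i) ∧ (∀ j, ∑ i, γ i j = ν j)}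

noncomputable def entropicCost (M : Matrix ι κ ℝ) (lam : ℝ) (γ : Matrix ι κ ℝ) : ℝ :=
  (∑ i, ∑ j, γ i j * M i j) + lam * ∑ i, ∑ j, γ i j * log (γ i j)

theorem convex_couplings (μ : ι → ℝ) (ν : κ → ℝ) : Convex ℝ (couplings μ ν) := by
  rintro γ ⟨hγ0, hγr, hγc⟩ ρ ⟨hρ0, hρr, hρc⟩ s t hs ht hst
  refine ⟨fun i j => ?_, fun i => ?_, fun j => ?_⟩
  · simp only [Matrix.add_apply, Matrix.smul_apply, smul_eq_mul]
    have := hγ0 i j; have := hρ0 i j; positivity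
  · simp only [Matrix.add_apply, Matrix.smul_apply, smul_eq_mul, sum_add_distrib, ← mul_sum,
      hγr, hρr, ← add_mul, hst, one_mul]
  · simp only [Matrix.add_apply, Matrix.smul_apply, smul_eq_mul, sum_add_distrib, ← mul_sum,
      hγc, hρc, ← add_mul, hst, one_mul]

theorem vecMulVec_mem_couplings {μ : ι → ℝ} {ν : κ → ℝ} (hμ : ∀ i, 0 ≤ μ i) (hν : ∀ j, 0 ≤ ν j)
    (hμ1 : ∑ i, μ i = 1) (hν1 : ∑ j, ν j = 1) : Matrix.vecMulVec μ ν ∈ couplings μ ν := by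
  refine ⟨fun i j => mul_nonneg (hμ i) (hν j), fun i => ?_, fun j => ?_⟩
  · simp only [Matrix.vecMulVec_apply, ← mul_sum, hν1, mul_one]
  · simp only [Matrix.vecMulVec_apply, ← sum_mul, hμ1, one_mul]

theorem entropicCost_smul_add_smul (M : Matrix ι κ ℝ) (lam : ℝ) (γ ρ : Matrix ι κ ℝ) (s t : ℝ) :
    entropicCost M lam (s • γ + t • ρ) =
      s * (∑ i, ∑ j, γ i j * M i j) + t * (∑ i, ∑ j, ρ i j * M i j) +
        lam * ∑ i, ∑ j, (s * γ i j + t * ρ i j) * log (s * γ i j + t * ρ i j) := by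
  simp only [entropicCost, Matrix.add_apply, Matrix.smul_apply, smul_eq_mul, add_mul,
    sum_add_distrib, mul_sum, mul_assoc]

theorem strictConvexOn_entropicCost (M : Matrix ι κ ℝ) {lam : ℝ} (hlam : 0 < lam) :
    StrictConvexOn ℝ {γ : Matrix ι κ ℝ | ∀ i j, 0 ≤ γ i j} (entropicCost M lam) := by
  refine ⟨fun γ hγ ρ hρ s t hs ht hst i j => ?_, fun γ hγ ρ hρ hne s t hs ht hst => ?_⟩
  · simp only [Matrix.add_apply, Matrix.smul_apply, smul_eq_mul]
    have := hγ i j; have := hρ i j; positivity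
  obtain ⟨a, b, hab⟩ : ∃ a b, γ a b ≠ ρ a b := by
    by_contra! h; exact hne (Matrix.ext h)
  have hentry : ∀ i j, (s * γ i j + t * ρ i j) * log (s * γ i j + t * ρ i j) ≤
      s * (γ i j * log (γ i j)) + t * (ρ i j * log (ρ i j)) := fun i j => by
    simpa only [smul_eq_mul] using
      convexOn_mul_log.2 (Set.mem_Ici.2 (hγ i j)) (Set.mem_Ici.2 (hρ i j)) hs.le ht.le hst
  have hentry_ab : (s * γ a b + t * ρ a b) * log (s * γ a b + t * ρ a b) <
      s * (γ a b * log (γ a b)) + t * (ρ a b * log (ρ a b)) := by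
    simpa only [smul_eq_mul] using
      strictConvexOn_mul_log.2 (Set.mem_Ici.2 (hγ a b)) (Set.mem_Ici.2 (hρ a b)) hab hs ht hst
  have hent : ∑ i, ∑ j, (s * γ i j + t * ρ i j) * log (s * γ i j + t * ρ i j) <
      s * (∑ i, ∑ j, γ i j * log (γ i j)) + t * ∑ i, ∑ j, ρ i j * log (ρ i j) := by
    simp only [mul_sum, ← sum_add_distrib]
    refine sum_lt_sum (fun i _ => sum_le_sum fun j _ => hentry i j)
      ⟨a, mem_univ _, sum_lt_sum (fun j _ => hentry a j) ⟨b, mem_univ _, hentry_ab⟩⟩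
  rw [entropicCost_smul_add_smul]
  simp only [entropicCost, smul_eq_mul]
  nlinarith [mul_lt_mul_of_pos_left hent hlam]

theorem entropicCost_smul_add_smul_le_of_eq_zero (M : Matrix ι κ ℝ) {lam : ℝ} (hlam : 0 ≤ lam)
    {γ ρ : Matrix ι κ ℝ} (hγ : ∀ i j, 0 ≤ γ i j) (hρ : ∀ i j, 0 ≤ ρ i j) {a : ι} {b : κ}
    (hγab : γ a b = 0) (hρab : 0 < ρ a b) {t : ℝ} (ht0 : 0 < t) (ht1 : t ≤ 1) :
    entropicCost M lam ((1 - t) • γ + t • ρ) ≤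
      (1 - t) * entropicCost M lam γ + t * entropicCost M lam ρ + lam * (t * ρ a b * log t) := by
  classical
  have hentry : ∀ i j, ((1 - t) * γ i j + t * ρ i j) * log ((1 - t) * γ i j + t * ρ i j) ≤
      (1 - t) * (γ i j * log (γ i j)) + t * (ρ i j * log (ρ i j)) +
        if j = b then if i = a then t * ρ a b * log t else 0 else 0 := by
    intro i j
    by_cases hij : i = a ∧ j = b
    · obtain ⟨rfl, rfl⟩ := hij
      rw [hγab, if_pos rfl, if_pos rfl, mul_zero, zero_add, log_mul ht0.ne' hρab.ne']
      linarith
    · have hzero : (if j = b then if i = a then t * ρ a b * log t else 0 else 0) = 0 := by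
        split_ifs <;> tauto
      rw [hzero, add_zero]
      simpa only [smul_eq_mul] using convexOn_mul_log.2 (Set.mem_Ici.2 (hγ i j))
        (Set.mem_Ici.2 (hρ i j)) (by linarith) ht0.le (by ring)
  have hent := sum_le_sum fun i (_ : i ∈ univ) => sum_le_sum fun j (_ : j ∈ univ) => hentry i j
  simp only [sum_add_distrib, ← mul_sum, sum_ite_eq', mem_univ, if_true] at hent
  rw [entropicCost_smul_add_smul]
  simp only [entropicCost]
  nlinarith [mul_le_mul_of_nonneg_left hent hlam]

theorem pos_of_isMinOn_entropicCost {M : Matrix ι κ ℝ} {lam : ℝ} (hlam : 0 < lam)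
    {S : Set (Matrix ι κ ℝ)} (hS : Convex ℝ S) (hS0 : ∀ γ ∈ S, ∀ i j, 0 ≤ γ i j)
    {γ ρ : Matrix ι κ ℝ} (hγ : γ ∈ S) (hmin : IsMinOn (entropicCost M lam) S γ) (hρ : ρ ∈ S)
    {a : ι} {b : κ} (hρab : 0 < ρ a b) : 0 < γ a b := by
  refine (hS0 γ hγ a b).lt_of_ne' fun hγab => ?_
  have hlog : Tendsto (fun t => entropicCost M lam ρ - entropicCost M lam γ + lam * ρ a b * log t)
      (𝓝[>] 0) atBot :=
    tendsto_atBot_add_const_left _ _ (tendsto_log_nhdsGT_zero.const_mul_atBot (by positivity))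
  obtain ⟨t, htD, ht0, ht1⟩ := ((hlog.eventually_lt_atBot 0).and
    (Ioo_mem_nhdsGT (zero_lt_one' ℝ))).exists
  have hle := entropicCost_smul_add_smul_le_of_eq_zero M hlam.le (hS0 γ hγ) (hS0 ρ hρ) hγab hρab
    ht0 ht1.le
  have hge : entropicCost M lam γ ≤ entropicCost M lam ((1 - t) • γ + t • ρ) :=
    hmin (hS hγ hρ (sub_nonneg.2 ht1.le) ht0.le (sub_add_cancel 1 t))
  nlinarith [mul_neg_of_pos_of_neg ht0 htD]

theorem hasDerivAt_entropicCost_add_smul (M : Matrix ι κ ℝ) (lam : ℝ) {γ : Matrix ι κ ℝ}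
    (hγ : ∀ i j, 0 < γ i j) (D : Matrix ι κ ℝ) :
    HasDerivAt (fun s : ℝ => entropicCost M lam (γ + s • D))
      ((∑ i, ∑ j, D i j * M i j) + lam * ∑ i, ∑ j, (log (γ i j) + 1) * D i j) 0 := by
  have hline : ∀ i j, HasDerivAt (fun s : ℝ => γ i j + s * D i j) (D i j) 0 := fun i j => by
    simpa using ((hasDerivAt_id (0 : ℝ)).mul_const (D i j)).const_add (γ i j)
  have hmul_log : ∀ i j, HasDerivAt (fun s : ℝ => (γ i j + s * D i j) * log (γ i j + s * D i j))
      ((log (γ i j) + 1) * D i j) 0 := fun i j =>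
    (hasDerivAt_mul_log (hγ i j).ne').comp_of_eq 0 (hline i j) (by simp)
  exact (HasDerivAt.fun_sum (u := univ) fun i _ => HasDerivAt.fun_sum (u := univ)
    fun j _ => (hline i j).mul_const (M i j)).add ((HasDerivAt.fun_sum (u := univ) fun i _ =>
      HasDerivAt.fun_sum (u := univ) fun j _ => hmul_log i j).const_mul lam)

theorem entropicCost_stationary_of_isMinOn {M : Matrix ι κ ℝ} {lam : ℝ} {μ : ι → ℝ} {ν : κ → ℝ}
    {γ : Matrix ι κ ℝ} (hγ : γ ∈ couplings μ ν) (hγpos : ∀ i j, 0 < γ i j)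
    (hmin : IsMinOn (entropicCost M lam) (couplings μ ν) γ) {D : Matrix ι κ ℝ}
    (hDrow : ∀ i, ∑ j, D i j = 0) (hDcol : ∀ j, ∑ i, D i j = 0) :
    (∑ i, ∑ j, D i j * M i j) + lam * ∑ i, ∑ j, (log (γ i j) + 1) * D i j = 0 := by
  refine IsLocalMin.hasDerivAt_eq_zero ?_ (hasDerivAt_entropicCost_add_smul M lam hγpos D)
  have hnonneg : ∀ᶠ s in 𝓝 (0 : ℝ), ∀ i j, 0 ≤ γ i j + s * D i j := by
    refine eventually_all.2 fun i => eventually_all.2 fun j => ?_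
    have hcont : ContinuousAt (fun s : ℝ => γ i j + s * D i j) 0 := by fun_prop
    exact (hcont.eventually (lt_mem_nhds (by simpa using hγpos i j))).mono fun s hs => hs.le
  filter_upwards [hnonneg] with s hs
  rw [zero_smul, add_zero]
  refine hmin ⟨hs, fun i => ?_, fun j => ?_⟩
  · change ∑ j, (γ i j + s * D i j) = μ i
    rw [sum_add_distrib, ← mul_sum, hDrow, mul_zero, add_zero, hγ.2.1]
  · change ∑ i, (γ i j + s * D i j) = ν j
    rw [sum_add_distrib, ← mul_sum, hDcol, mul_zero, add_zero, hγ.2.2]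

theorem sum_sum_vecMulVec_single_sub_single_mul [DecidableEq ι] [DecidableEq κ] (i i' : ι)
    (j j' : κ) (f : ι → κ → ℝ) :
    ∑ p, ∑ q, Matrix.vecMulVec (Pi.single i 1 - Pi.single i' 1)
      (Pi.single j 1 - Pi.single j' 1) p q * f p q = f i j - f i j' - (f i' j - f i' j') := by
  simp [Matrix.vecMulVec_apply, Pi.single_apply, sub_mul, mul_sub, sum_sub_distrib, ite_mul]
  ring

theorem cost_add_log_cycle_of_isMinOn {M : Matrix ι κ ℝ} {lam : ℝ} {μ : ι → ℝ} {ν : κ → ℝ}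
    {γ : Matrix ι κ ℝ} (hγ : γ ∈ couplings μ ν) (hγpos : ∀ i j, 0 < γ i j)
    (hmin : IsMinOn (entropicCost M lam) (couplings μ ν) γ) (i i' : ι) (j j' : κ) :
    (M i j + lam * log (γ i j)) + (M i' j' + lam * log (γ i' j')) =
      (M i j' + lam * log (γ i j')) + (M i' j + lam * log (γ i' j)) := by
  classical
  have h := entropicCost_stationary_of_isMinOn hγ hγpos hmin
    (D := Matrix.vecMulVec (Pi.single i 1 - Pi.single i' 1) (Pi.single j 1 - Pi.single j' 1))
    (fun p => by simp [Matrix.vecMulVec_apply, ← mul_sum, sum_sub_distrib])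
    (fun q => by simp [Matrix.vecMulVec_apply, ← sum_mul, sum_sub_distrib])
  simp only [mul_comm (log _ + 1)] at h
  rw [sum_sum_vecMulVec_single_sub_single_mul i i' j j' M,
    sum_sum_vecMulVec_single_sub_single_mul i i' j j' fun p q => log (γ p q) + 1] at h
  linarith

theorem exists_add_of_add_eq_add {α β G : Type*} [AddCommGroup G] (A : α → β → G)
    (h : ∀ i i' j j', A i j + A i' j' = A i j' + A i' j) :
    ∃ (a : α → G) (b : β → G), ∀ i j, A i j = a i + b j := by
  rcases isEmpty_or_nonempty α with hα | ⟨⟨i₀⟩⟩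
  · exact ⟨0, 0, fun i => isEmptyElim i⟩
  rcases isEmpty_or_nonempty β with hβ | ⟨⟨j₀⟩⟩
  · exact ⟨0, 0, fun _ j => isEmptyElim j⟩
  exact ⟨fun i => A i j₀, fun j => A i₀ j - A i₀ j₀, fun i j => by
    rw [← add_sub_assoc, eq_sub_iff_add_eq, h]⟩

theorem exists_scaling_of_cycle {α β : Type*} {M γ : Matrix α β ℝ} {lam : ℝ} (hlam : lam ≠ 0)
    (hγ : ∀ i j, 0 < γ i j)
    (hcyc : ∀ i i' j j', (M i j + lam * log (γ i j)) + (M i' j' + lam * log (γ i' j')) =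
      (M i j' + lam * log (γ i j')) + (M i' j + lam * log (γ i' j))) :
    ∃ (u : α → ℝ) (v : β → ℝ), (∀ i, 0 < u i) ∧ (∀ j, 0 < v j) ∧
      ∀ i j, γ i j = u i * exp (-M i j / lam) * v j := by
  obtain ⟨a, b, hab⟩ := exists_add_of_add_eq_add (fun i j => M i j + lam * log (γ i j)) hcyc
  refine ⟨fun i => exp (a i / lam), fun j => exp (b j / lam), fun i => exp_pos _,
    fun j => exp_pos _, fun i j => ?_⟩
  have hlog : log (γ i j) = a i / lam + -M i j / lam + b j / lam := by
    field_simp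
    linarith [hab i j]
  rw [← exp_add, ← exp_add, ← hlog, exp_log (hγ i j)]

/-- Sinkhorn characterization: a minimizer `γ*` of the
entropy-regularized OT problem over the transportation polytope `Ω` (with
strictly positive marginals `μ, ν`) is the unique minimizer and has the scaling
form `γ*_{ij} = u_i exp(−M_{ij}/λ) v_j` with strictly positive `u, v`. -/
theorem entropic_OT_sinkhorn_form (ns nt : ℕ)
    (M : Matrix (Fin ns) (Fin nt) ℝ) (lam : ℝ) (hlam : 0 < lam)
    (μ : Fin ns → ℝ) (ν : Fin nt → ℝ)
    (hμ : ∀ i, 0 < μ i) (hν : ∀ j, 0 < ν j)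
    (hμ1 : ∑ i, μ i = 1) (hν1 : ∑ j, ν j = 1)
    (Ω : Set (Matrix (Fin ns) (Fin nt) ℝ))
    (hΩ : Ω = {γ | (∀ i j, 0 ≤ γ i j) ∧ (∀ i, ∑ j, γ i j = μ i) ∧
      (∀ j, ∑ i, γ i j = ν j)})
    (obj : Matrix (Fin ns) (Fin nt) ℝ → ℝ)
    (hobj : obj = fun γ => (∑ i, ∑ j, γ i j * M i j) +
      lam * ∑ i, ∑ j, γ i j * Real.log (γ i j))
    (γstar : Matrix (Fin ns) (Fin nt) ℝ) (hγstar : γstar ∈ Ω)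
    (hmin : ∀ γ ∈ Ω, obj γstar ≤ obj γ) :
    (∀ γ' ∈ Ω, (∀ γ ∈ Ω, obj γ' ≤ obj γ) → γ' = γstar) ∧
      ∃ (u : Fin ns → ℝ) (v : Fin nt → ℝ),
        (∀ i, 0 < u i) ∧ (∀ j, 0 < v j) ∧
          ∀ i j, γstar i j = u i * Real.exp (-M i j / lam) * v j := by
  subst hΩ hobj
  have hconvex : Convex ℝ (couplings μ ν) := convex_couplings μ ν
  have hnonneg : couplings μ ν ⊆ {γ | ∀ i j, 0 ≤ γ i j} := fun _ hγ => hγ.1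
  have hγmin : IsMinOn (entropicCost M lam) (couplings μ ν) γstar := hmin
  have hprod : Matrix.vecMulVec μ ν ∈ couplings μ ν :=
    vecMulVec_mem_couplings (fun i => (hμ i).le) (fun j => (hν j).le) hμ1 hν1
  have hpos : ∀ i j, 0 < γstar i j := fun i j =>
    pos_of_isMinOn_entropicCost hlam hconvex hnonneg hγstar hγmin hprod (mul_pos (hμ i) (hν j))
  refine ⟨fun γ' hγ' hγ'min => ?_, ?_⟩
  · exact ((strictConvexOn_entropicCost M hlam).subset hnonneg hconvex).eq_of_isMinOn
      hγ'min hγmin hγ' hγstar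
  · exact exists_scaling_of_cycle hlam.ne' hpos (cost_add_log_cycle_of_isMinOn hγstar hpos hγmin)
end
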